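/- arXiv:2112.10626 — 9 statements merged into one kernel-verified Lean document; each statement's English description precedes it below -/
import Mathlib

section
/- Let S₂ : ℕ → ℚ be defined by S₂(d) = Σ_{i₁=2}^{d−1} Σ_{i₂=2}^{i₁} (12i₁² − 18i₁)(12i₂² − 18i₂) + (3d² − 7d) · Σ_{i=2}^{d−1} (12i² − 18i) + (3d² − 7d)². Then there exists a real constant C > 0 such that for every natural number d ≥ 2 one has |S₂(d) − (8d⁶ − (168/5)d⁵)| ≤ C·d⁴. (This is the δ = 2 case of Theorem 3.2: the number A₂(d) of artificial binodal floor plans of degree d equals 8d⁶ − (168/5)d⁵ + O(d⁴).) -/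
open Finset

/-- The weighted count `A₂(d)` of artificial binodal floor plans of degree `d`. -/
noncomputable def S₂ (d : ℕ) : ℚ :=
  (∑ i₁ ∈ Finset.Icc (2 : ℤ) ((d : ℤ) - 1), ∑ i₂ ∈ Finset.Icc (2 : ℤ) i₁,
      (12 * (i₁ : ℚ) ^ 2 - 18 * (i₁ : ℚ)) * (12 * (i₂ : ℚ) ^ 2 - 18 * (i₂ : ℚ)))
  + (3 * (d : ℚ) ^ 2 - 7 * (d : ℚ)) *
      (∑ i ∈ Finset.Icc (2 : ℤ) ((d : ℤ) - 1), (12 * (i : ℚ) ^ 2 - 18 * (i : ℚ)))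
  + (3 * (d : ℚ) ^ 2 - 7 * (d : ℚ)) ^ 2

lemma Icc_step (b : ℤ) (hb : 1 ≤ b) (f : ℤ → ℚ) :
    ∑ i ∈ Finset.Icc (2 : ℤ) (b + 1), f i
      = (∑ i ∈ Finset.Icc (2 : ℤ) b, f i) + f (b + 1) := by
  have h : Finset.Icc (2 : ℤ) (b + 1) = insert (b + 1) (Finset.Icc (2 : ℤ) b) := by
    ext x; simp only [Finset.mem_Icc, Finset.mem_insert]; omega
  rw [h, Finset.sum_insert (by simp only [Finset.mem_Icc]; omega)]
  ring

lemma Tnat (k : ℕ) :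
    (∑ i ∈ Finset.Icc (2 : ℤ) ((k : ℤ) + 1), (12 * (i : ℚ) ^ 2 - 18 * (i : ℚ)))
      = 4 * ((k : ℚ) + 1) ^ 3 - 3 * ((k : ℚ) + 1) ^ 2 - 7 * ((k : ℚ) + 1) + 6 := by
  induction k with
  | zero => norm_num
  | succ n ih =>
      have h : ((n + 1 : ℕ) : ℤ) + 1 = ((n : ℤ) + 1) + 1 := by push_cast; ring
      rw [h, Icc_step _ (by omega), ih]
      push_cast
      ring

lemma Tsum (m : ℤ) (hm : 1 ≤ m) :
    (∑ i ∈ Finset.Icc (2 : ℤ) m, (12 * (i : ℚ) ^ 2 - 18 * (i : ℚ)))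
      = 4 * (m : ℚ) ^ 3 - 3 * (m : ℚ) ^ 2 - 7 * (m : ℚ) + 6 := by
  obtain ⟨k, rfl⟩ : ∃ k : ℕ, m = (k : ℤ) + 1 := ⟨(m - 1).toNat, by omega⟩
  rw [Tnat k]
  push_cast
  ring

lemma S1nat (k : ℕ) :
    (∑ i ∈ Finset.Icc (2 : ℤ) ((k : ℤ) + 1),
        (12 * (i : ℚ) ^ 2 - 18 * (i : ℚ)) *
          (4 * (i : ℚ) ^ 3 - 3 * (i : ℚ) ^ 2 - 7 * (i : ℚ) + 6))
      = 8 * ((k : ℚ) + 1) ^ 6 + 12/5 * ((k : ℚ) + 1) ^ 5 - 83/2 * ((k : ℚ) + 1) ^ 4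
          + 15 * ((k : ℚ) + 1) ^ 3 + 67/2 * ((k : ℚ) + 1) ^ 2 - 87/5 * ((k : ℚ) + 1) := by
  induction k with
  | zero => norm_num
  | succ n ih =>
      have h : ((n + 1 : ℕ) : ℤ) + 1 = ((n : ℤ) + 1) + 1 := by push_cast; ring
      rw [h, Icc_step _ (by omega), ih]
      push_cast
      ring

lemma S1sum (m : ℤ) (hm : 1 ≤ m) :
    (∑ i ∈ Finset.Icc (2 : ℤ) m,
        (12 * (i : ℚ) ^ 2 - 18 * (i : ℚ)) *
          (4 * (i : ℚ) ^ 3 - 3 * (i : ℚ) ^ 2 - 7 * (i : ℚ) + 6))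
      = 8 * (m : ℚ) ^ 6 + 12/5 * (m : ℚ) ^ 5 - 83/2 * (m : ℚ) ^ 4
          + 15 * (m : ℚ) ^ 3 + 67/2 * (m : ℚ) ^ 2 - 87/5 * (m : ℚ) := by
  obtain ⟨k, rfl⟩ : ∃ k : ℕ, m = (k : ℤ) + 1 := ⟨(m - 1).toNat, by omega⟩
  rw [S1nat k]
  push_cast
  ring

lemma S₂_closed (d : ℕ) (hd : 2 ≤ d) :
    S₂ d = 8 * (d : ℚ) ^ 6 - 168/5 * (d : ℚ) ^ 5 + 5/2 * (d : ℚ) ^ 4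
        + 141 * (d : ℚ) ^ 3 - 349/2 * (d : ℚ) ^ 2 + 243/5 * (d : ℚ) := by
  have hm : (1 : ℤ) ≤ (d : ℤ) - 1 := by omega
  have hdbl : (∑ i₁ ∈ Finset.Icc (2 : ℤ) ((d : ℤ) - 1), ∑ i₂ ∈ Finset.Icc (2 : ℤ) i₁,
      (12 * (i₁ : ℚ) ^ 2 - 18 * (i₁ : ℚ)) * (12 * (i₂ : ℚ) ^ 2 - 18 * (i₂ : ℚ)))
      = ∑ i₁ ∈ Finset.Icc (2 : ℤ) ((d : ℤ) - 1),
        (12 * (i₁ : ℚ) ^ 2 - 18 * (i₁ : ℚ)) *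
          (4 * (i₁ : ℚ) ^ 3 - 3 * (i₁ : ℚ) ^ 2 - 7 * (i₁ : ℚ) + 6) := by
    refine Finset.sum_congr rfl fun i₁ hi₁ => ?_
    rw [← Finset.mul_sum, Tsum i₁ (by simp only [Finset.mem_Icc] at hi₁; omega)]
  unfold S₂
  rw [hdbl, S1sum _ hm, Tsum _ hm]
  have : ((((d : ℤ) - 1) : ℤ) : ℚ) = (d : ℚ) - 1 := by push_cast; ring
  rw [this]
  ring

/-- Theorem 3.2, case δ = 2: `A₂(d) = 8d⁶ − (168/5)d⁵ + O(d⁴)`. -/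
theorem stmt_0 :
    ∃ C : ℝ, 0 < C ∧ ∀ d : ℕ, 2 ≤ d →
      |((S₂ d : ℚ) : ℝ) - (8 * (d : ℝ) ^ 6 - 168 / 5 * (d : ℝ) ^ 5)| ≤ C * (d : ℝ) ^ 4 := by
  refine ⟨400, by norm_num, fun d hd => ?_⟩
  have hx : (2 : ℝ) ≤ (d : ℝ) := by exact_mod_cast hd
  rw [S₂_closed d hd]
  push_cast
  rw [abs_le]
  constructor <;> nlinarith [sq_nonneg ((d:ℝ)), sq_nonneg ((d:ℝ) - 2), pow_pos (by linarith : (0:ℝ) < (d:ℝ)) 4, sq_nonneg ((d:ℝ)^2 - 2*(d:ℝ))]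
end

section
/- Let S₃ : ℕ → ℚ be defined by S₃(d) = Σ_{i₁=2}^{d−1} Σ_{i₂=2}^{i₁} Σ_{i₃=2}^{i₂} (12i₁² − 18i₁)(12i₂² − 18i₂)(12i₃² − 18i₃) + (3d² − 7d) · Σ_{i₂=2}^{d−1} Σ_{i₃=2}^{i₂} (12i₂² − 18i₂)(12i₃² − 18i₃) + (3d² − 7d)² · Σ_{i=2}^{d−1} (12i² − 18i) + (3d² − 7d)³. Then there exists D ∈ ℕ such that for every natural number d ≥ D one has S₃(d) ≤ (32/3)d⁹ − (1341/35)d⁸. (This is the δ = 3 upper bound of Theorem 3.2: there are at most (32/3)d⁹ − (1341/35)d⁸ + lower-order terms trinodal surfaces with separated nodes.) -/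
open Finset

/-- The weighted count `A₃(d)` of artificial trinodal floor plans of degree `d`. -/
noncomputable def S₃ (d : ℕ) : ℚ :=
  (∑ i₁ ∈ Finset.Icc (2 : ℤ) ((d : ℤ) - 1), ∑ i₂ ∈ Finset.Icc (2 : ℤ) i₁,
      ∑ i₃ ∈ Finset.Icc (2 : ℤ) i₂,
      (12 * (i₁ : ℚ) ^ 2 - 18 * (i₁ : ℚ)) * (12 * (i₂ : ℚ) ^ 2 - 18 * (i₂ : ℚ)) *
        (12 * (i₃ : ℚ) ^ 2 - 18 * (i₃ : ℚ)))
  + (3 * (d : ℚ) ^ 2 - 7 * (d : ℚ)) *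
      (∑ i₂ ∈ Finset.Icc (2 : ℤ) ((d : ℤ) - 1), ∑ i₃ ∈ Finset.Icc (2 : ℤ) i₂,
        (12 * (i₂ : ℚ) ^ 2 - 18 * (i₂ : ℚ)) * (12 * (i₃ : ℚ) ^ 2 - 18 * (i₃ : ℚ)))
  + (3 * (d : ℚ) ^ 2 - 7 * (d : ℚ)) ^ 2 *
      (∑ i ∈ Finset.Icc (2 : ℤ) ((d : ℤ) - 1), (12 * (i : ℚ) ^ 2 - 18 * (i : ℚ)))
  + (3 * (d : ℚ) ^ 2 - 7 * (d : ℚ)) ^ 3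

lemma icc_step (n : ℤ) (F : ℤ → ℚ) (h : (1:ℤ) ≤ n) :
    ∑ i ∈ Icc (2:ℤ) (n+1), F i = (∑ i ∈ Icc (2:ℤ) n, F i) + F (n+1) := by
  rw [show Icc (2:ℤ) (n+1) = insert (n+1) (Icc (2:ℤ) n) by ext x; simp; omega,
      Finset.sum_insert (by simp), add_comm]

lemma L1 : ∀ n : ℤ, 1 ≤ n →
    ∑ i ∈ Icc (2:ℤ) n, (12 * (i : ℚ) ^ 2 - 18 * (i : ℚ))
      = 4 * (n:ℚ)^3 - 3 * (n:ℚ)^2 - 7 * (n:ℚ) + 6 := by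
  refine Int.le_induction ?_ ?_
  · norm_num
  · intro n hn ih
    rw [icc_step n _ hn, ih]
    push_cast
    ring

lemma L2 : ∀ n : ℤ, 1 ≤ n →
    ∑ i₂ ∈ Icc (2:ℤ) n, ∑ i₃ ∈ Icc (2:ℤ) i₂,
      (12 * (i₂ : ℚ) ^ 2 - 18 * (i₂ : ℚ)) * (12 * (i₃ : ℚ) ^ 2 - 18 * (i₃ : ℚ))
      = 8 * (n:ℚ)^6 + 12/5 * (n:ℚ)^5 - 83/2 * (n:ℚ)^4 + 15 * (n:ℚ)^3
        + 67/2 * (n:ℚ)^2 - 87/5 * (n:ℚ) := by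
  refine Int.le_induction ?_ ?_
  · norm_num
  · intro n hn ih
    rw [icc_step n _ hn, ih, ← Finset.mul_sum, L1 (n+1) (by omega)]
    push_cast
    ring

lemma L3 : ∀ n : ℤ, 1 ≤ n →
    ∑ i₁ ∈ Icc (2:ℤ) n, ∑ i₂ ∈ Icc (2:ℤ) i₁, ∑ i₃ ∈ Icc (2:ℤ) i₂,
      (12 * (i₁ : ℚ) ^ 2 - 18 * (i₁ : ℚ)) * (12 * (i₂ : ℚ) ^ 2 - 18 * (i₂ : ℚ)) *
        (12 * (i₃ : ℚ) ^ 2 - 18 * (i₃ : ℚ))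
      = 32/3 * (n:ℚ)^9 + 168/5 * (n:ℚ)^8 - 2482/35 * (n:ℚ)^7 - 1833/10 * (n:ℚ)^6
        + 349/2 * (n:ℚ)^5 + 2829/10 * (n:ℚ)^4 - 4379/30 * (n:ℚ)^3
        - 666/5 * (n:ℚ)^2 + 222/7 * (n:ℚ) := by
  refine Int.le_induction ?_ ?_
  · norm_num
  · intro n hn ih
    rw [icc_step n _ hn, ih]
    have h2 : ∑ i ∈ Icc (2:ℤ) (n+1), (12 * (i : ℚ) ^ 2 - 18 * (i : ℚ)) *
        ∑ i₃ ∈ Icc (2:ℤ) i, (12 * (i₃ : ℚ) ^ 2 - 18 * (i₃ : ℚ))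
        = 8 * ((n:ℚ)+1)^6 + 12/5 * ((n:ℚ)+1)^5 - 83/2 * ((n:ℚ)+1)^4 + 15 * ((n:ℚ)+1)^3
          + 67/2 * ((n:ℚ)+1)^2 - 87/5 * ((n:ℚ)+1) := by
      simp_rw [Finset.mul_sum]
      have := L2 (n+1) (by omega)
      push_cast at this ⊢
      exact this
    simp_rw [mul_assoc, ← Finset.mul_sum]
    rw [h2]
    push_cast
    ring

/-- Theorem 3.2, case δ = 3 (upper bound): for all sufficiently large `d`,
`A₃(d) ≤ (32/3)d⁹ − (1341/35)d⁸`. -/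
theorem stmt_1 :
    ∃ D : ℕ, ∀ d : ℕ, D ≤ d →
      S₃ d ≤ 32 / 3 * (d : ℚ) ^ 9 - 1341 / 35 * (d : ℚ) ^ 8 := by
  refine ⟨6, fun d hd => ?_⟩
  have h1 : (1:ℤ) ≤ (d:ℤ) - 1 := by omega
  have hd6 : (6:ℚ) ≤ (d:ℚ) := by exact_mod_cast hd
  have hd0 : (0:ℚ) ≤ (d:ℚ) := by linarith
  rw [S₃, L1 _ h1, L2 _ h1, L3 _ h1]
  push_cast
  nlinarith [mul_nonneg (pow_nonneg hd0 6) (by nlinarith : (0:ℚ) ≤ 11814 * (d:ℚ) - 63063),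
    mul_nonneg (pow_nonneg hd0 3) (by nlinarith : (0:ℚ) ≤ 142758 * (d:ℚ) - 213479),
    mul_nonneg hd0 (by nlinarith : (0:ℚ) ≤ 82593 * (d:ℚ) - 3330),
    pow_nonneg hd0 8, pow_nonneg hd0 5]
end

section
/- Let c₁, …, c₆ ∈ ℂ satisfy c₁c₄ = c₂c₃ and c₄c₅ = c₂c₆, and let f = c₁ + c₂x + c₃y + c₄xy + c₅z + c₆yz ∈ ℂ[x,y,z]. Then c₄·f = (c₂ + c₄y)(c₃ + c₄x + c₆z) as polynomials. Moreover, if c₄ ≠ 0, then every point (x,y,z) ∈ ℂ³ satisfying c₂ + c₄y = 0 and c₃ + c₄x + c₆z = 0 is a singular point of f (f and all three first-order partial derivatives of f vanish there), and the set of such points is infinite; in particular f has non-isolated singularities. (This is the elimination of polytope family 9 in Proposition 4.5.) -/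
/-!
The two relations make `c₄ f` factor as `(c₂ + c₄ y)(c₃ + c₄ x + c₆ z)`.
A product of two polynomials vanishes to second order on the common zero set of its factors
(Leibniz rule), so for `c₄ ≠ 0` every point of the line `c₂ + c₄ y = 0 = c₃ + c₄ x + c₆ z`
is a singular point of `f`.
-/

open MvPolynomial

/-- A point `p ∈ ℂ³` is a singular point of `f ∈ ℂ[x,y,z]` if `f` and all three
first-order partial derivatives of `f` vanish at `p`. -/
def IsSingularPoint (f : MvPolynomial (Fin 3) ℂ) (p : Fin 3 → ℂ) : Prop :=
  eval p f = 0 ∧ ∀ i : Fin 3, eval p (pderiv i f) = 0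

theorem MvPolynomial.eval_pderiv_mul_eq_zero {σ R : Type*} [CommRing R] (i : σ) {p : σ → R}
    {g h : MvPolynomial σ R} (hg : eval p g = 0) (hh : eval p h = 0) :
    eval p (pderiv i (g * h)) = 0 := by
  simp [Derivation.leibniz, hg, hh]

theorem isSingularPoint_of_C_mul_eq_mul {f g h : MvPolynomial (Fin 3) ℂ} {a : ℂ} {p : Fin 3 → ℂ}
    (ha : a ≠ 0) (hfac : C a * f = g * h) (hg : eval p g = 0) (hh : eval p h = 0) :
    IsSingularPoint f p := by
  refine ⟨?_, fun i => ?_⟩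
  · have : a * eval p f = 0 := by simpa [hg] using congrArg (eval p) hfac
    exact (mul_eq_zero.mp this).resolve_left ha
  · have : a * eval p (pderiv i f) = 0 := by
      have := eval_pderiv_mul_eq_zero i hg hh
      rwa [← hfac, pderiv_C_mul, map_mul, eval_C] at this
    exact (mul_eq_zero.mp this).resolve_left ha

theorem setOf_eq_zero_and_eq_zero_infinite {K : Type*} [Field K] [Infinite K]
    {a b c d e : K} (ha : a ≠ 0) (hd : d ≠ 0) :
    {p : Fin 3 → K | b + a * p 1 = 0 ∧ c + d * p 0 + e * p 2 = 0}.Infinite := by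
  have hinj : Function.Injective fun t : K => (![(-c - e * t) / d, -b / a, t] : Fin 3 → K) :=
    fun s t hst => by simpa using congrFun hst 2
  refine Set.infinite_of_injective_forall_mem hinj fun t => ⟨?_, ?_⟩
  · simp [mul_div_cancel₀ _ ha]
  · simp only [Matrix.cons_val_zero, Matrix.cons_val_two, Matrix.tail_cons, Matrix.head_cons,
      mul_div_cancel₀ _ hd]
    ring

/-- The elimination of polytope family 9 in Proposition 4.5: if `c₁c₄ = c₂c₃` and
`c₄c₅ = c₂c₆`, then `c₄·f` factors as `(c₂ + c₄y)(c₃ + c₄x + c₆z)`, and when `c₄ ≠ 0`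
every point with `c₂ + c₄y = 0` and `c₃ + c₄x + c₆z = 0` is a singular point of `f`;
the set of such points is infinite, so `f` has non-isolated singularities. -/
theorem stmt_8 (c₁ c₂ c₃ c₄ c₅ c₆ : ℂ) (h1 : c₁ * c₄ = c₂ * c₃) (h2 : c₄ * c₅ = c₂ * c₆) :
    C c₄ * (C c₁ + C c₂ * X 0 + C c₃ * X 1 + C c₄ * X 0 * X 1 + C c₅ * X 2 +
        C c₆ * X 1 * X 2 : MvPolynomial (Fin 3) ℂ) =
      (C c₂ + C c₄ * X 1) * (C c₃ + C c₄ * X 0 + C c₆ * X 2) ∧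
    (c₄ ≠ 0 →
      (∀ p : Fin 3 → ℂ, c₂ + c₄ * p 1 = 0 → c₃ + c₄ * p 0 + c₆ * p 2 = 0 →
        IsSingularPoint (C c₁ + C c₂ * X 0 + C c₃ * X 1 + C c₄ * X 0 * X 1 + C c₅ * X 2 +
          C c₆ * X 1 * X 2) p) ∧
      {p : Fin 3 → ℂ | c₂ + c₄ * p 1 = 0 ∧ c₃ + c₄ * p 0 + c₆ * p 2 = 0}.Infinite ∧
      {p : Fin 3 → ℂ | IsSingularPoint (C c₁ + C c₂ * X 0 + C c₃ * X 1 + C c₄ * X 0 * X 1 +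
          C c₅ * X 2 + C c₆ * X 1 * X 2) p}.Infinite) := by
  have hC₁ : (C c₁ * C c₄ : MvPolynomial (Fin 3) ℂ) = C c₂ * C c₃ := by simp only [← C_mul, h1]
  have hC₂ : (C c₄ * C c₅ : MvPolynomial (Fin 3) ℂ) = C c₂ * C c₆ := by simp only [← C_mul, h2]
  have hfac : C c₄ * (C c₁ + C c₂ * X 0 + C c₃ * X 1 + C c₄ * X 0 * X 1 + C c₅ * X 2 +
        C c₆ * X 1 * X 2 : MvPolynomial (Fin 3) ℂ) =
      (C c₂ + C c₄ * X 1) * (C c₃ + C c₄ * X 0 + C c₆ * X 2) := by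
    linear_combination hC₁ + X 2 * hC₂
  refine ⟨hfac, fun hc₄ => ?_⟩
  have hsing : ∀ p : Fin 3 → ℂ, c₂ + c₄ * p 1 = 0 → c₃ + c₄ * p 0 + c₆ * p 2 = 0 →
      IsSingularPoint (C c₁ + C c₂ * X 0 + C c₃ * X 1 + C c₄ * X 0 * X 1 + C c₅ * X 2 +
        C c₆ * X 1 * X 2) p := fun p hy hxz =>
    isSingularPoint_of_C_mul_eq_mul hc₄ hfac (by simpa using hy) (by simpa using hxz)
  have hline := setOf_eq_zero_and_eq_zero_infinite (b := c₂) (c := c₃) (e := c₆) hc₄ hc₄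
  exact ⟨hsing, hline, hline.mono fun p hp => hsing p hp.1 hp.2⟩
end

section
/- Let a, b be integers with a ≥ 1 and b ≥ 0, let c₁, …, c₆ ∈ ℂ, and let p = c₁ + c₂y + c₃y² + x·(c₄ + c₅ y^b z^a + c₆ y^{2b} z^{2a}) ∈ ℂ[x,y,z]. If p has a singular point (x₀, y₀, z₀) with x₀, y₀, z₀ all nonzero, then for every x ∈ ℂ the point (x, y₀, z₀) is also a singular point of p; in particular p has infinitely many singular points, i.e. non-isolated singularities. (This is the elimination of polytope family 16 in Proposition 4.5: no polytope of family 16 is binodal.) -/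
open MvPolynomial

/-- The generic polynomial with Newton polytope in family 16:
`p = c₁ + c₂y + c₃y² + x(c₄ + c₅ y^b z^a + c₆ y^{2b} z^{2a})`. -/
noncomputable def family16Poly (a b : ℕ) (c₁ c₂ c₃ c₄ c₅ c₆ : ℂ) :
    MvPolynomial (Fin 3) ℂ :=
  C c₁ + C c₂ * X 1 + C c₃ * X 1 ^ 2 +
    X 0 * (C c₄ + C c₅ * X 1 ^ b * X 2 ^ a + C c₆ * X 1 ^ (2 * b) * X 2 ^ (2 * a))

/-- The elimination of polytope family 16 in Proposition 4.5: if `p` has a singular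
point with all coordinates nonzero, then varying the first coordinate arbitrarily gives
further singular points; in particular `p` has infinitely many singular points, i.e.
non-isolated singularities. -/
theorem stmt_9 (a b : ℕ) (ha : 1 ≤ a) (c₁ c₂ c₃ c₄ c₅ c₆ : ℂ)
    (q : Fin 3 → ℂ) (hq : ∀ i, q i ≠ 0)
    (hsing : IsSingularPoint (family16Poly a b c₁ c₂ c₃ c₄ c₅ c₆) q) :
    (∀ x : ℂ, IsSingularPoint (family16Poly a b c₁ c₂ c₃ c₄ c₅ c₆)
        (Function.update q 0 x)) ∧
    {p : Fin 3 → ℂ | IsSingularPoint (family16Poly a b c₁ c₂ c₃ c₄ c₅ c₆) p}.Infinite := by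
  obtain ⟨h0, h1⟩ := hsing
  have e0 := h0
  have e1 := h1 0
  have e2 := h1 1
  have e3 := h1 2
  simp [family16Poly, pderiv_mul, pderiv_pow, pderiv_X, Pi.single_apply] at e0 e1 e2 e3
  rcases e3 with e3 | e3
  · exact absurd e3 (hq 0)
  have ha1 : a - 1 + 1 = a := Nat.succ_pred_eq_of_pos ha
  have ha2 : 2 * a - 1 + 1 = 2 * a := by omega
  have haC : (a : ℂ) ≠ 0 := Nat.cast_ne_zero.mpr (Nat.one_le_iff_ne_zero.mp ha)
  -- T = 0
  have hT : c₅ * q 1 ^ b * q 2 ^ a + 2 * (c₆ * q 1 ^ (2 * b) * q 2 ^ (2 * a)) = 0 := by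
    have h := congrArg (· * q 2) e3
    simp only [add_mul, mul_assoc, ← pow_succ, ha1, ha2, zero_mul] at h
    have h' : (a : ℂ) * (c₅ * q 1 ^ b * q 2 ^ a + 2 * (c₆ * q 1 ^ (2 * b) * q 2 ^ (2 * a))) = 0 := by
      linear_combination h
    exact (mul_eq_zero.mp h').resolve_left haC
  -- D = 0
  have hD : q 2 ^ a * (c₅ * ((b:ℂ) * q 1 ^ (b - 1))) + q 2 ^ (2 * a) * (c₆ * (2 * (b:ℂ) * q 1 ^ (2 * b - 1))) = 0 := by
    rcases Nat.eq_zero_or_pos b with hb | hb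
    · subst hb; simp
    · have hb1 : b - 1 + 1 = b := Nat.succ_pred_eq_of_pos hb
      have hb2 : 2 * b - 1 + 1 = 2 * b := by omega
      have h' : (q 2 ^ a * (c₅ * ((b:ℂ) * q 1 ^ (b - 1))) + q 2 ^ (2 * a) * (c₆ * (2 * (b:ℂ) * q 1 ^ (2 * b - 1)))) * q 1 = 0 := by
        have : (q 2 ^ a * (c₅ * ((b:ℂ) * q 1 ^ (b - 1))) + q 2 ^ (2 * a) * (c₆ * (2 * (b:ℂ) * q 1 ^ (2 * b - 1)))) * q 1
            = (b : ℂ) * (c₅ * q 1 ^ (b-1+1) * q 2 ^ a + 2 * (c₆ * q 1 ^ (2*b-1+1) * q 2 ^ (2 * a))) := by ring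
        rw [this, hb1, hb2, hT, mul_zero]
      exact (mul_eq_zero.mp h').resolve_right (hq 1)
  have hG' : c₂ + c₃ * (2 * q 1) = 0 := by
    have := e2; rw [hD, mul_zero, add_zero] at this; exact this
  have hG : c₁ + c₂ * q 1 + c₃ * q 1 ^ 2 = 0 := by
    have := e0; rw [e1, mul_zero, add_zero] at this; exact this
  have key : ∀ x : ℂ, IsSingularPoint (family16Poly a b c₁ c₂ c₃ c₄ c₅ c₆)
      (Function.update q 0 x) := by
    intro x
    constructor
    · simp [family16Poly, Function.update, show ((1:Fin 3) ≠ 0) from by decide,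
        show ((2:Fin 3) ≠ 0) from by decide]
      linear_combination hG + x * e1
    · intro i
      fin_cases i <;>
        simp [family16Poly, pderiv_mul, pderiv_pow, pderiv_X, Pi.single_apply, Function.update]
      · linear_combination e1
      · linear_combination hG' + x * hD
      · right; linear_combination e3
  refine ⟨key, ?_⟩
  apply Set.infinite_of_injective_forall_mem
    (f := fun x : ℂ => Function.update q 0 x)
  · intro x y hxy
    have := congrFun hxy 0
    simpa using this
  · intro x; exact key x
end

section
/- Let a, b be integers with a ≥ b ≥ 1 and gcd(a,b) = 1, let c₁, …, c₆ ∈ ℂ be all nonzero, and let p = c₁ + c₂y + c₃z + x·(c₄ + c₅ y^a z^b + c₆ y^{2a} z^{2b}) ∈ ℂ[x,y,z]. Then p has at most one singular point in the torus (ℂ∖{0})³; in particular p cannot have two distinct singular points in the torus, so no polytope of family 17 is binodal. (This is the elimination of polytope family 17 in Proposition 4.5.) -/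
open MvPolynomial

lemma key17 (a b : ℕ) (ha : 1 ≤ a) (hb : 1 ≤ b)
    (c₁ c₂ c₃ c₄ c₅ c₆ : ℂ)
    (q : Fin 3 → ℂ)
    (h : IsSingularPoint (C c₁ + C c₂ * X 1 + C c₃ * X 2 +
        X 0 * (C c₄ + C c₅ * X 1 ^ a * X 2 ^ b + C c₆ * X 1 ^ (2 * a) * X 2 ^ (2 * b))) q) :
    (((a : ℂ) + b) * c₂ * q 1 = -(a * c₁)) ∧
    (((a : ℂ) + b) * c₃ * q 2 = -(b * c₁)) ∧
    (((a : ℂ) + b) * (c₅ * (q 1 ^ a * q 2 ^ b) + 2 * c₆ * (q 1 ^ a * q 2 ^ b) ^ 2) * q 0 = c₁) := by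
  obtain ⟨he, hd⟩ := h
  obtain ⟨a, rfl⟩ : ∃ a', a = a' + 1 := ⟨a - 1, by omega⟩
  obtain ⟨b, rfl⟩ : ∃ b', b = b' + 1 := ⟨b - 1, by omega⟩
  have h0 := hd 0
  have h1 := hd 1
  have h2 := hd 2
  simp [pderiv_mul, pderiv_pow, pderiv_X_self, pderiv_X_of_ne, Fin.ext_iff] at h0 h1 h2 he
  rw [show 2 * (a + 1) - 1 = 2 * a + 1 by omega] at h1
  rw [show 2 * (b + 1) - 1 = 2 * b + 1 by omega] at h2
  set x := q 0; set y := q 1; set z := q 2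
  set S : ℂ := c₅ * (y ^ (a+1) * z ^ (b+1)) + 2 * c₆ * (y ^ (a+1) * z ^ (b+1)) ^ 2 with hS
  have key1 : c₂ * y = -(x * (a + 1 : ℂ) * S) := by
    rw [hS]; linear_combination y * h1
  have key2 : c₃ * z = -(x * (b + 1 : ℂ) * S) := by
    rw [hS]; linear_combination z * h2
  have key3 : c₁ = x * ((a : ℂ) + 1 + (b + 1)) * S := by
    rw [hS]; linear_combination he - x * h0 - key1 - key2 -
      (x * ((a:ℂ)+1) + x * ((b:ℂ)+1)) * hS
  refine ⟨?_, ?_, ?_⟩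
  · push_cast
    linear_combination ((a:ℂ)+1+(b+1)) * key1 + ((a:ℂ)+1) * key3 + x * ((a:ℂ)+1) * ((a:ℂ)+1+(b+1)) * hS
  · push_cast
    linear_combination ((a:ℂ)+1+(b+1)) * key2 + ((b:ℂ)+1) * key3 + x * ((b:ℂ)+1) * ((a:ℂ)+1+(b+1)) * hS
  · push_cast
    linear_combination -key3 + x * ((a:ℂ)+1+(b+1)) * hS

/-- The elimination of polytope family 17 in Proposition 4.5: the polynomial
`p = c₁ + c₂y + c₃z + x(c₄ + c₅ y^a z^b + c₆ y^{2a} z^{2b})` with all coefficients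
nonzero has at most one singular point in the torus `(ℂ∖{0})³`; in particular it
cannot have two distinct nodes there, so no polytope of family 17 is binodal. -/
theorem stmt_10 (a b : ℕ) (hb : 1 ≤ b) (hab : b ≤ a) (hgcd : Nat.gcd a b = 1)
    (c₁ c₂ c₃ c₄ c₅ c₆ : ℂ) (hc₁ : c₁ ≠ 0) (hc₂ : c₂ ≠ 0) (hc₃ : c₃ ≠ 0)
    (hc₄ : c₄ ≠ 0) (hc₅ : c₅ ≠ 0) (hc₆ : c₆ ≠ 0) :
    Set.Subsingleton {q : Fin 3 → ℂ | (∀ i, q i ≠ 0) ∧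
      IsSingularPoint (C c₁ + C c₂ * X 1 + C c₃ * X 2 +
        X 0 * (C c₄ + C c₅ * X 1 ^ a * X 2 ^ b + C c₆ * X 1 ^ (2 * a) * X 2 ^ (2 * b))) q} := by
  have ha : 1 ≤ a := le_trans hb hab
  intro q hq q' hq'
  obtain ⟨hq0, hsing⟩ := hq
  obtain ⟨hq0', hsing'⟩ := hq'
  obtain ⟨k1, k2, k3⟩ := key17 a b ha hb c₁ c₂ c₃ c₄ c₅ c₆ q hsing
  obtain ⟨k1', k2', k3'⟩ := key17 a b ha hb c₁ c₂ c₃ c₄ c₅ c₆ q' hsing'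
  have hab0 : ((a : ℂ) + b) ≠ 0 := by
    have h := Nat.cast_ne_zero (R := ℂ).mpr (show a + b ≠ 0 by omega)
    push_cast at h; exact h
  have e1 : q 1 = q' 1 :=
    mul_left_cancel₀ (mul_ne_zero hab0 hc₂) (k1.trans k1'.symm)
  have e2 : q 2 = q' 2 :=
    mul_left_cancel₀ (mul_ne_zero hab0 hc₃) (k2.trans k2'.symm)
  have e0 : q 0 = q' 0 := by
    rw [e1, e2] at k3
    have hne : ((a : ℂ) + b) * (c₅ * (q' 1 ^ a * q' 2 ^ b) + 2 * c₆ * (q' 1 ^ a * q' 2 ^ b) ^ 2) ≠ 0 := by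
      intro h
      rw [h, zero_mul] at k3
      exact hc₁ k3.symm
    exact mul_left_cancel₀ hne (k3.trans k3'.symm)
  funext i
  fin_cases i <;> assumption
end

section
/- Let a ≥ 1 and b ≥ 0 be integers, let c₁, …, c₆ ∈ ℂ with c₆ ≠ 0, and let p = c₁ + c₂z + c₃z² + c₄z³ + c₅x + c₆ x y^a z^b ∈ ℂ[x,y,z]. Then p has no singular point in the torus (ℂ∖{0})³ (indeed ∂p/∂y = a·c₆·x·y^{a−1}·z^b is nonzero at every point of the torus); in particular no polytope of family 15 is binodal. (Part of Proposition 4.5.) -/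
open MvPolynomial

/-- Part of Proposition 4.5 (family 15): the polynomial
`p = c₁ + c₂z + c₃z² + c₄z³ + c₅x + c₆ x y^a z^b` with `c₆ ≠ 0` has no singular
point in the torus `(ℂ∖{0})³`; in particular no polytope of family 15 is binodal. -/
theorem stmt_11 (a b : ℕ) (ha : 1 ≤ a) (c₁ c₂ c₃ c₄ c₅ c₆ : ℂ) (hc₆ : c₆ ≠ 0) :
    ∀ q : Fin 3 → ℂ, (∀ i, q i ≠ 0) →
      ¬ IsSingularPoint (C c₁ + C c₂ * X 2 + C c₃ * X 2 ^ 2 + C c₄ * X 2 ^ 3 +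
          C c₅ * X 0 + C c₆ * X 0 * X 1 ^ a * X 2 ^ b) q := by
  rintro q hq ⟨h0, h⟩
  have h1 := h 1
  simp [pderiv_X, Pi.single_apply] at h1
  rcases h1 with ⟨h1, -⟩ | (h1 | h1) | h1 | ⟨h1, -⟩
  · exact hq 2 h1
  · exact hc₆ h1
  · exact hq 0 h1
  · omega
  · exact hq 1 h1
end

section
/- Let c₁, …, c₆ ∈ ℂ with c₆ ≠ 0, and let p = c₁ + c₂y + c₃yz + c₄yz² + c₅y² + c₆xy ∈ ℂ[x,y,z]. Then p has no singular point in the torus (ℂ∖{0})³ (indeed ∂p/∂x = c₆·y is nonzero at every point of the torus); in particular the polytope of family 1 is not binodal. (Part of Proposition 4.5.) -/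
open MvPolynomial

/-- Part of Proposition 4.5 (family 1): the polynomial
`p = c₁ + c₂y + c₃yz + c₄yz² + c₅y² + c₆xy` with `c₆ ≠ 0` has no singular point
in the torus `(ℂ∖{0})³`; in particular the polytope of family 1 is not binodal. -/
theorem stmt_12 (c₁ c₂ c₃ c₄ c₅ c₆ : ℂ) (hc₆ : c₆ ≠ 0) :
    ∀ q : Fin 3 → ℂ, (∀ i, q i ≠ 0) →
      ¬ IsSingularPoint (C c₁ + C c₂ * X 1 + C c₃ * X 1 * X 2 + C c₄ * X 1 * X 2 ^ 2 +
          C c₅ * X 1 ^ 2 + C c₆ * X 0 * X 1) q := by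
  intro q hq h
  have h0 := h.2 0
  simp [pderiv_X, Pi.single_apply] at h0
  rcases h0 with h0 | h0
  · exact hq 1 h0
  · exact hc₆ h0
end

section
/- Let a be a real number with a ≥ 4, let λ > 0, and let η be a real number with 0 < η < 1/(a−1). Then there do not exist real numbers x, y, z and positive real numbers α₁, α₂, β₁, β₂, γ₁, γ₂ satisfying the three vector equations in ℝ³: (0,0,0) = (x,y,z) + α₁·(−1,0,0) + α₂·(0,0,−1); (1, η, η²) = (x,y,z) + β₁·(2−a, 1, 1) + β₂·(a−2, a−1, 1); and (λ, λη, λη²) = (x,y,z) + γ₁·(a−2, a−1, 1) + γ₂·(1, 0, 0). (This is the impossibility of the lattice path A−C−D−F for polytope family 20, from the proof of Lemma 4.10 in Appendix A.) -/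
/-- The impossibility of the lattice path A−C−D−F for polytope family 20, from the
proof of Lemma 4.10 in Appendix A: no tropical surface with vertex `(x,y,z)` dual to a
polytope of family 20 passes through the three points `(0,0,0)`, `(1,η,η²)`,
`(λ,λη,λη²)` in the prescribed two-dimensional cells. -/
theorem stmt_15 (a lam η : ℝ) (ha : 4 ≤ a) (hlam : 0 < lam)
    (hη0 : 0 < η) (hη : η < 1 / (a - 1)) :
    ¬ ∃ (x y z α₁ α₂ β₁ β₂ γ₁ γ₂ : ℝ),
      0 < α₁ ∧ 0 < α₂ ∧ 0 < β₁ ∧ 0 < β₂ ∧ 0 < γ₁ ∧ 0 < γ₂ ∧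
      -- (0,0,0) = (x,y,z) + α₁ (−1,0,0) + α₂ (0,0,−1)
      (0 = x + α₁ * (-1) + α₂ * 0 ∧
       0 = y + α₁ * 0 + α₂ * 0 ∧
       0 = z + α₁ * 0 + α₂ * (-1)) ∧
      -- (1,η,η²) = (x,y,z) + β₁ (2−a,1,1) + β₂ (a−2,a−1,1)
      (1 = x + β₁ * (2 - a) + β₂ * (a - 2) ∧
       η = y + β₁ * 1 + β₂ * (a - 1) ∧
       η ^ 2 = z + β₁ * 1 + β₂ * 1) ∧
      -- (λ,λη,λη²) = (x,y,z) + γ₁ (a−2,a−1,1) + γ₂ (1,0,0)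
      (lam = x + γ₁ * (a - 2) + γ₂ * 1 ∧
       lam * η = y + γ₁ * (a - 1) + γ₂ * 0 ∧
       lam * η ^ 2 = z + γ₁ * 1 + γ₂ * 0) := by
  rintro ⟨x, y, z, α₁, α₂, β₁, β₂, γ₁, γ₂, hα₁, hα₂, hβ₁, hβ₂, hγ₁, hγ₂,
    ⟨e1, e2, e3⟩, ⟨f1, f2, f3⟩, ⟨g1, g2, g3⟩⟩
  have ha1 : (0:ℝ) < a - 1 := by linarith
  have hkey : η * (a - 1) < 1 := by
    linarith [(lt_div_iff₀ ha1).mp hη]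
  nlinarith [mul_pos hlam hη0, mul_pos (mul_pos hlam hη0) hη0,
    mul_lt_mul_of_pos_left hkey (mul_pos hlam hη0)]
end

section
/- Let a, b, c, d be positive integers with ad − bc = 1, c > a, and c + d > a + b, let η > 0 be real, and let λ ≥ 2 be real. Then there do not exist real numbers x, y, z and positive real numbers α₁, α₂, β₁, β₂, γ₁, γ₂ satisfying the three vector equations in ℝ³: (0,0,0) = (x,y,z) + α₁·(0,−1,0) + α₂·(0,0,−1); (1, η, η²) = (x,y,z) + β₁·(1,0,0) + β₂·(b, b, −a); and (λ, λη, λη²) = (x,y,z) + γ₁·(1,0,0) + γ₂·(d−b−1, d−b, a−c). (This is the impossibility of the lattice path A−D−E−F for polytope family 21, from the proof of Lemma 4.10 in Appendix A.) -/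
set_option maxHeartbeats 1000000 in
/-- The impossibility of the lattice path A−D−E−F for polytope family 21, from the
proof of Lemma 4.10 in Appendix A: no tropical surface with vertex `(x,y,z)` dual to a
polytope of family 21 (with parameters `a, b, c, d`) passes through the three points
`(0,0,0)`, `(1,η,η²)`, `(λ,λη,λη²)` in the prescribed two-dimensional cells. -/
theorem stmt_16 (a b c d : ℤ) (ha : 0 < a) (hb : 0 < b) (hc : 0 < c) (hd : 0 < d)
    (hdet : a * d - b * c = 1) (hca : a < c) (hsum : a + b < c + d)
    (η : ℝ) (hη : 0 < η) (lam : ℝ) (hlam : 2 ≤ lam) :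
    ¬ ∃ (x y z α₁ α₂ β₁ β₂ γ₁ γ₂ : ℝ),
      0 < α₁ ∧ 0 < α₂ ∧ 0 < β₁ ∧ 0 < β₂ ∧ 0 < γ₁ ∧ 0 < γ₂ ∧
      -- (0,0,0) = (x,y,z) + α₁ (0,−1,0) + α₂ (0,0,−1)
      (0 = x + α₁ * 0 + α₂ * 0 ∧
       0 = y + α₁ * (-1) + α₂ * 0 ∧
       0 = z + α₁ * 0 + α₂ * (-1)) ∧
      -- (1,η,η²) = (x,y,z) + β₁ (1,0,0) + β₂ (b,b,−a)
      (1 = x + β₁ * 1 + β₂ * (b : ℝ) ∧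
       η = y + β₁ * 0 + β₂ * (b : ℝ) ∧
       η ^ 2 = z + β₁ * 0 + β₂ * (-(a : ℝ))) ∧
      -- (λ,λη,λη²) = (x,y,z) + γ₁ (1,0,0) + γ₂ (d−b−1,d−b,a−c)
      (lam = x + γ₁ * 1 + γ₂ * ((d : ℝ) - (b : ℝ) - 1) ∧
       lam * η = y + γ₁ * 0 + γ₂ * ((d : ℝ) - (b : ℝ)) ∧
       lam * η ^ 2 = z + γ₁ * 0 + γ₂ * ((a : ℝ) - (c : ℝ))) := by
  rintro ⟨x, y, z, α₁, α₂, β₁, β₂, γ₁, γ₂, hα₁, hα₂, hβ₁, hβ₂, hγ₁, hγ₂,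
    ⟨hx1, hy1, hz1⟩, ⟨hx2, hy2, hz2⟩, ⟨hx3, hy3, hz3⟩⟩
  have hdetR : (a : ℝ) * d - (b : ℝ) * (c : ℝ) = 1 := by exact_mod_cast hdet
  have hbR : (1 : ℝ) ≤ (b : ℝ) := by exact_mod_cast hb
  have hcaR : (a : ℝ) + 1 ≤ (c : ℝ) := by exact_mod_cast hca
  have hdb : b + 1 ≤ d := by nlinarith
  have hdbR : (b : ℝ) + 1 ≤ (d : ℝ) := by exact_mod_cast hdb
  have hbeta : β₂ = (lam - 1) * (((d : ℝ) - b) * η ^ 2 + ((c : ℝ) - a) * η) := by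
    linear_combination ((d : ℝ) - b) * hz2 - ((d : ℝ) - b) * hz3 +
      ((c : ℝ) - a) * hy2 - ((c : ℝ) - a) * hy3 - β₂ * hdetR
  have hy0 : 0 < y := by linarith [hy1]
  have hkey : β₂ * (b : ℝ) < η := by linarith [hy2]
  have hX : η ^ 2 + η ≤ ((d : ℝ) - b) * η ^ 2 + ((c : ℝ) - a) * η := by
    nlinarith [mul_nonneg (by linarith : (0:ℝ) ≤ (d:ℝ) - (b:ℝ) - 1) (sq_nonneg η),
      mul_nonneg (by linarith : (0:ℝ) ≤ (c:ℝ) - (a:ℝ) - 1) hη.le]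
  have hX0 : (0:ℝ) ≤ ((d : ℝ) - b) * η ^ 2 + ((c : ℝ) - a) * η := by nlinarith [sq_nonneg η]
  have h2 : η ^ 2 + η ≤ β₂ := by
    rw [hbeta]
    nlinarith [mul_nonneg (by linarith : (0:ℝ) ≤ lam - 2) hX0]
  have h3 : β₂ ≤ β₂ * b := by nlinarith [mul_le_mul_of_nonneg_left hbR hβ₂.le]
  nlinarith [sq_nonneg η]
end
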